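/- arXiv:2006.03188 — 4 statements merged into one kernel-verified Lean document; each statement's English description precedes it below -/
import Mathlib

section
/- If G is a connected graph of treedepth k and G is a subgraph of the closure of a rooted tree T of height k, then the root of T is a vertex of G. -/
/-!
Suppose the root of `T` is not a vertex of `G`. Adjacent vertices of `G` are comparable in `T`
and neither is the root, so they lie below the same child `r` of the root; by connectivity all of
`G` lies in the subtree rooted at `r`. That subtree has height `k - 1` and its closure still
contains `G`, contradicting treedepth `k`.
-/

/-- A rooted tree on vertex set `V`, given by a parent function together with a
depth function certifying acyclicity.  The root is the unique vertex of depth `0`. -/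
structure RTree (V : Type*) where
  parent : V → V
  root : V
  depth : V → ℕ
  depth_root : depth root = 0
  depth_parent : ∀ v, v ≠ root → depth (parent v) + 1 = depth v
  parent_root : parent root = root

namespace RTree

variable {V : Type*} (T : RTree V)

/-- `u` is a strict ancestor of `v` in `T`. -/
def IsStrictAncestor (u v : V) : Prop :=
  u ≠ v ∧ ∃ n : ℕ, T.parent^[n] v = u

/-- The closure of a rooted tree: `u ~ v` iff one is a strict ancestor of the other. -/
def closure : SimpleGraph V where
  Adj u v := T.IsStrictAncestor u v ∨ T.IsStrictAncestor v u
  symm := by constructor; intro u v h; tauto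
  loopless := by constructor; rintro v (⟨h, -⟩ | ⟨h, -⟩) <;> exact h rfl

/-- `T` has height at most `k`: every root-to-leaf path has at most `k` vertices. -/
def HeightLE (k : ℕ) : Prop := ∀ v, T.depth v < k

/-- `v` is a leaf of `T` (it has no children). -/
def IsLeaf (v : V) : Prop := ∀ u, T.parent u = v → u = v

end RTree

/-- A graph `G` has treedepth at most `k` if it embeds into the closure of a rooted
tree of height at most `k` (whose vertex set may be larger than that of `G`). -/
def TreedepthLE {W : Type} (G : SimpleGraph W) (k : ℕ) : Prop :=
  ∃ (V : Type) (T : RTree V) (f : W ↪ V),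
    T.HeightLE k ∧ ∀ a b, G.Adj a b → T.closure.Adj (f a) (f b)

namespace RTree

variable {V : Type*} (T : RTree V)

def IsAncestor (u v : V) : Prop := ∃ n : ℕ, T.parent^[n] v = u

variable {T}

lemma eq_root_of_depth_eq_zero {v : V} (h : T.depth v = 0) : v = T.root := by
  by_contra hv
  have := T.depth_parent v hv
  omega

lemma depth_pos_of_ne_root {v : V} (h : v ≠ T.root) : 0 < T.depth v :=
  Nat.pos_of_ne_zero fun h0 => h (eq_root_of_depth_eq_zero h0)

lemma depth_parent_le (v : V) : T.depth (T.parent v) ≤ T.depth v := by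
  by_cases hv : v = T.root
  · rw [hv, T.parent_root]
  · have := T.depth_parent v hv
    omega

lemma depth_iterate_parent {v : V} {n : ℕ} (h : n ≤ T.depth v) :
    T.depth (T.parent^[n] v) = T.depth v - n := by
  induction n with
  | zero => rfl
  | succ n ih =>
    have hn := ih (by omega)
    have hne : T.parent^[n] v ≠ T.root := fun he => by
      rw [he, T.depth_root] at hn
      omega
    rw [Function.iterate_succ_apply']
    have := T.depth_parent _ hne
    omega

lemma iterate_parent_root (n : ℕ) : T.parent^[n] T.root = T.root :=
  Function.iterate_fixed T.parent_root n

lemma iterate_parent_depth (v : V) : T.parent^[T.depth v] v = T.root :=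
  eq_root_of_depth_eq_zero (by rw [depth_iterate_parent le_rfl, Nat.sub_self])

namespace IsAncestor

@[refl]
lemma refl (v : V) : T.IsAncestor v v := ⟨0, rfl⟩

lemma trans {u v w : V} (huv : T.IsAncestor u v) (hvw : T.IsAncestor v w) :
    T.IsAncestor u w := by
  obtain ⟨m, rfl⟩ := huv
  obtain ⟨n, rfl⟩ := hvw
  exact ⟨m + n, Function.iterate_add_apply _ _ _ _⟩

lemma depth_le {u v : V} (h : T.IsAncestor u v) : T.depth u ≤ T.depth v := by
  obtain ⟨n, rfl⟩ := h
  induction n with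
  | zero => rfl
  | succ n ih => exact (Function.iterate_succ_apply' T.parent n v ▸ depth_parent_le _).trans ih

lemma iterate_parent_depth_sub {u v : V} (h : T.IsAncestor u v) :
    T.parent^[T.depth v - T.depth u] v = u := by
  obtain ⟨n, rfl⟩ := h
  by_cases hn : n ≤ T.depth v
  · rw [depth_iterate_parent hn, Nat.sub_sub_self hn]
  · have hroot : T.parent^[n] v = T.root := by
      rw [show n = (n - T.depth v) + T.depth v by omega, Function.iterate_add_apply,
        iterate_parent_depth, iterate_parent_root]
    rw [hroot, T.depth_root, Nat.sub_zero, iterate_parent_depth]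

lemma eq_of_depth_le {u v : V} (h : T.IsAncestor u v) (hd : T.depth v ≤ T.depth u) : u = v := by
  rw [← h.iterate_parent_depth_sub, Nat.sub_eq_zero_of_le hd, Function.iterate_zero_apply]

lemma total {u v w : V} (hu : T.IsAncestor u w) (hv : T.IsAncestor v w) :
    T.IsAncestor u v ∨ T.IsAncestor v u := by
  obtain ⟨m, rfl⟩ := hu
  obtain ⟨n, rfl⟩ := hv
  rcases le_total m n with hmn | hnm
  · exact Or.inr ⟨n - m, by rw [← Function.iterate_add_apply, Nat.sub_add_cancel hmn]⟩
  · exact Or.inl ⟨m - n, by rw [← Function.iterate_add_apply, Nat.sub_add_cancel hnm]⟩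

lemma parent {r v : V} (h : T.IsAncestor r v) (hv : v ≠ r) : T.IsAncestor r (T.parent v) := by
  obtain ⟨_ | n, hn⟩ := h
  · exact absurd hn hv
  · exact ⟨n, by rwa [← Function.iterate_succ_apply]⟩

lemma isAncestor_iff {r u v : V} (huv : T.IsAncestor u v) (hr : T.depth r ≤ T.depth u) :
    T.IsAncestor r u ↔ T.IsAncestor r v := by
  refine ⟨fun hru => hru.trans huv, fun hrv => ?_⟩
  rcases total hrv huv with hru | hur
  · exact hru
  · rw [hur.eq_of_depth_le hr]

end IsAncestor

lemma isAncestor_iff_of_closure_adj {r u v : V} (huv : T.closure.Adj u v)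
    (hu : T.depth r ≤ T.depth u) (hv : T.depth r ≤ T.depth v) :
    T.IsAncestor r u ↔ T.IsAncestor r v := by
  rcases huv with ⟨-, huv⟩ | ⟨-, hvu⟩
  · exact IsAncestor.isAncestor_iff huv hu
  · exact (IsAncestor.isAncestor_iff hvu hv).symm

variable (T)

open Classical in
noncomputable def subtree (r : V) : RTree {v // T.IsAncestor r v} where
  parent v := if h : v.1 = r then v else ⟨T.parent v, v.2.parent h⟩
  root := ⟨r, .refl r⟩
  depth v := T.depth v - T.depth r
  depth_root := Nat.sub_self _
  depth_parent := by
    rintro ⟨v, hv⟩ hne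
    have hvr : v ≠ r := fun h => hne (Subtype.ext h)
    have hvroot : v ≠ T.root := by
      rintro rfl
      obtain ⟨n, hn⟩ := hv
      exact hvr (by rwa [iterate_parent_root] at hn)
    have := T.depth_parent v hvroot
    have := (hv.parent hvr).depth_le
    simp only [dif_neg hvr]
    omega
  parent_root := dif_pos rfl

variable {T}

lemma coe_parent_subtree {r : V} {v : {v // T.IsAncestor r v}} (hv : v.1 ≠ r) :
    ((T.subtree r).parent v).1 = T.parent v.1 := by
  simp only [subtree, dif_neg hv]

lemma coe_iterate_parent_subtree {r : V} (v : {v // T.IsAncestor r v}) {n : ℕ}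
    (hn : n ≤ T.depth v - T.depth r) :
    ((T.subtree r).parent^[n] v).1 = T.parent^[n] v.1 := by
  induction n with
  | zero => rfl
  | succ n ih =>
    have hd : T.depth (T.parent^[n] v.1) = T.depth v - n := depth_iterate_parent (by omega)
    have hne : T.parent^[n] v.1 ≠ r := fun h => by
      rw [h] at hd
      omega
    rw [Function.iterate_succ_apply', Function.iterate_succ_apply',
      coe_parent_subtree (by rwa [ih (by omega)]), ih (by omega)]

lemma IsStrictAncestor.subtree {r : V} {u v : {v // T.IsAncestor r v}}
    (h : T.IsStrictAncestor u v) : (T.subtree r).IsStrictAncestor u v := by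
  obtain ⟨hne, n, hn⟩ := h
  have huv : T.IsAncestor u v := ⟨n, hn⟩
  refine ⟨fun h => hne (congrArg Subtype.val h), T.depth v - T.depth u, Subtype.ext ?_⟩
  have := u.2.depth_le
  rw [coe_iterate_parent_subtree v (by omega), huv.iterate_parent_depth_sub]

lemma closure_adj_subtree {r : V} {u v : {v // T.IsAncestor r v}}
    (h : T.closure.Adj u v) : (T.subtree r).closure.Adj u v :=
  h.imp IsStrictAncestor.subtree IsStrictAncestor.subtree

lemma HeightLE.subtree {k : ℕ} (h : T.HeightLE k) (r : V) :
    (T.subtree r).HeightLE (k - T.depth r) := fun v => by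
  have := h v
  have := v.2.depth_le
  show T.depth v - T.depth r < k - T.depth r
  omega

end RTree

open RTree

lemma treedepthLE_sub_depth_of_forall_isAncestor {W V : Type} {G : SimpleGraph W} {k : ℕ}
    {T : RTree V} (hT : T.HeightLE k) {f : W ↪ V}
    (hsub : ∀ a b, G.Adj a b → T.closure.Adj (f a) (f b)) {r : V}
    (hr : ∀ w, T.IsAncestor r (f w)) : TreedepthLE G (k - T.depth r) :=
  ⟨_, T.subtree r,
    ⟨fun w => ⟨f w, hr w⟩, fun _ _ h => f.injective (congrArg Subtype.val h)⟩,
    hT.subtree r, fun a b hab => closure_adj_subtree (hsub a b hab)⟩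

lemma forall_isAncestor_of_preconnected {W V : Type} {G : SimpleGraph W}
    (hG : G.Preconnected) {T : RTree V} {f : W → V}
    (hsub : ∀ a b, G.Adj a b → T.closure.Adj (f a) (f b)) {r : V}
    (hdepth : ∀ w, T.depth r ≤ T.depth (f w)) {w₀ : W} (h₀ : T.IsAncestor r (f w₀))
    (w : W) :
    T.IsAncestor r (f w) := by
  obtain ⟨p⟩ := hG w₀ w
  induction p with
  | nil => exact h₀
  | cons hab _ ih =>
    exact ih ((isAncestor_iff_of_closure_adj (hsub _ _ hab) (hdepth _) (hdepth _)).1 h₀)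

/-- If `G` is a connected graph whose treedepth is exactly `k`, and `G`
is a subgraph of the closure of a rooted tree `T` of height exactly `k` (via an embedding
`f` of the vertices of `G` into the vertices of `T`), then the root of `T` is a vertex
of `G`, i.e. lies in the range of `f`. -/
theorem rootedTree_root_mem_of_connected_treedepth
    {W V : Type} (G : SimpleGraph W) (k : ℕ)
    (hconn : G.Connected)
    (htd : TreedepthLE G k ∧ ∀ j < k, ¬ TreedepthLE G j)
    (T : RTree V)
    (hheight : T.HeightLE k ∧ ∃ v, T.depth v + 1 = k)
    (f : W ↪ V)
    (hsub : ∀ a b, G.Adj a b → T.closure.Adj (f a) (f b)) :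
    ∃ w : W, f w = T.root := by
  by_contra! hroot
  obtain ⟨w₀⟩ := hconn.nonempty
  have hpos : ∀ w, 0 < T.depth (f w) := fun w => depth_pos_of_ne_root (hroot w)
  set r := T.parent^[T.depth (f w₀) - 1] (f w₀)
  have hr : T.depth r = 1 := by
    rw [depth_iterate_parent (Nat.sub_le _ _)]
    have := hpos w₀
    omega
  have hall : ∀ w, T.IsAncestor r (f w) :=
    forall_isAncestor_of_preconnected hconn.preconnected hsub (fun w => hr ▸ hpos w) ⟨_, rfl⟩
  have hk : k - 1 < k := by
    have := hheight.1 (f w₀)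
    omega
  exact htd.2 _ hk (hr ▸ treedepthLE_sub_depth_of_forall_isAncestor hheight.1 hsub hall)
end

section
/- Let k ≥ 3 and let G be the closure of the rooted tree consisting of a path p_1,...,p_{k-1} with 2k-4 leaves attached to p_{k-1}. Then the clique number of G equals k and the chromatic number of G equals k. -/
/-!
The graph is the join of a `(k-1)`-clique with a nonempty independent set. The clique plus one
leaf is a `k`-clique, so `k ≤ ω ≤ χ`; colouring every leaf with one new colour shows `χ ≤ k`.
-/

/-- The closure of the rooted tree consisting of a path `p₁, …, p_{k-1}` (rooted at `p₁`)
together with `2k - 4` leaves attached to `p_{k-1}`.  Path vertices are `Sum.inl i`,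
leaves are `Sum.inr j`; the path vertices form a clique, each leaf is adjacent to every
path vertex, and no two leaves are adjacent. -/
def pathLeafGraph (k : ℕ) : SimpleGraph (Fin (k - 1) ⊕ Fin (2 * k - 4)) where
  Adj u v := u ≠ v ∧ (u.isLeft ∨ v.isLeft)
  symm := ⟨by rintro u v ⟨h1, h2⟩; exact ⟨h1.symm, h2.symm⟩⟩
  loopless := ⟨fun v h => h.1 rfl⟩

open Finset SimpleGraph

/-- The join of the complete graph on `α` with the edgeless graph on `β`. -/
def completeSplitGraph (α β : Type*) : SimpleGraph (α ⊕ β) where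
  Adj u v := u ≠ v ∧ (u.isLeft ∨ v.isLeft)
  symm := ⟨by rintro u v ⟨h1, h2⟩; exact ⟨h1.symm, h2.symm⟩⟩
  loopless := ⟨fun v h => h.1 rfl⟩

namespace completeSplitGraph

variable {α β : Type*}

def coloring : (completeSplitGraph α β).Coloring (Option α) :=
  Coloring.mk (Sum.elim some fun _ => none) <| by
    rintro (a | b) (a' | b') ⟨hne, hleft⟩
    · simpa using hne
    · simp
    · simp
    · simp at hleft

theorem colorable [Fintype α] : (completeSplitGraph α β).Colorable (Fintype.card α + 1) := by
  simpa using (coloring (α := α) (β := β)).colorable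

theorem isNClique_cons_inr [Fintype α] (b : β) :
    (completeSplitGraph α β).IsNClique (Fintype.card α + 1)
      (cons (Sum.inr b) (univ.map Function.Embedding.inl) (by simp)) := by
  refine ⟨?_, by simp⟩
  rintro (a | b₁) h₁ (a' | b₂) h₂ hne
  · exact ⟨hne, Or.inl rfl⟩
  · exact ⟨hne, Or.inl rfl⟩
  · exact ⟨hne, Or.inr rfl⟩
  · simp only [coe_cons, coe_map, Function.Embedding.inl_apply, coe_univ, Set.image_univ,
      Set.mem_insert_iff, Sum.inr.injEq, Set.mem_range, reduceCtorEq, exists_false, or_false] at h₁ h₂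
    exact absurd (by rw [h₁, h₂]) hne

theorem chromaticNumber_eq [Fintype α] [Nonempty β] :
    (completeSplitGraph α β).chromaticNumber = Fintype.card α + 1 := by
  refine le_antisymm colorable.chromaticNumber_le ?_
  obtain ⟨b⟩ := ‹Nonempty β›
  have hb := isNClique_cons_inr (α := α) b
  exact_mod_cast hb.card_eq ▸ hb.isClique.card_le_chromaticNumber

theorem cliqueNum_eq [Fintype α] [Finite β] [Nonempty β] :
    (completeSplitGraph α β).cliqueNum = Fintype.card α + 1 := by
  refine le_antisymm ?_ ?_
  · have h := (completeSplitGraph α β).cliqueNum_le_chromaticNumber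
    rw [chromaticNumber_eq] at h
    exact_mod_cast h
  · obtain ⟨b⟩ := ‹Nonempty β›
    have hb := isNClique_cons_inr (α := α) b
    exact hb.card_eq ▸ hb.isClique.card_le_cliqueNum

end completeSplitGraph

theorem pathLeafGraph_eq_completeSplitGraph (k : ℕ) :
    pathLeafGraph k = completeSplitGraph (Fin (k - 1)) (Fin (2 * k - 4)) := rfl

/-- For `k ≥ 3`, the closure of the rooted tree consisting of a path
`p₁, …, p_{k-1}` with `2k - 4` leaves attached to `p_{k-1}` has clique number exactly `k`
and chromatic number exactly `k`. -/
theorem pathLeafGraph_cliqueNum_chromaticNumber (k : ℕ) (hk : 3 ≤ k) :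
    (pathLeafGraph k).cliqueNum = k ∧ (pathLeafGraph k).chromaticNumber = k := by
  have : Nonempty (Fin (2 * k - 4)) := ⟨⟨0, by omega⟩⟩
  rw [pathLeafGraph_eq_completeSplitGraph, completeSplitGraph.cliqueNum_eq,
    completeSplitGraph.chromaticNumber_eq, Fintype.card_fin]
  exact ⟨by omega, by norm_cast; omega⟩
end

section
/- The graph G (root r joined to a path w_0,...,w_48, with pendant-triangle vertices v_1,...,v_48 where v_i ~ w_{i-1}, w_i) is outerplanar and is not bipartite. -/
/-- Vertices of the graph `G`: the root `r` (left), the path vertices `w₀, …, w₄₈`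
(middle, indexed by `Fin 49`), and the vertices `v₁, …, v₄₈` (right, indexed by `Fin 48`,
where index `j` stands for `v_{j+1}`). -/
abbrev V98 : Type := Unit ⊕ Fin 49 ⊕ Fin 48

/-- One-directional edge relation for `G`:  `r ~ wᵢ` for all `i`;  `wᵢ ~ w_{i+1}`;  and
`v_{j+1} ~ w_j`, `v_{j+1} ~ w_{j+1}`. -/
def Rel98 : V98 → V98 → Prop
  | Sum.inl _, Sum.inr (Sum.inl _) => True
  | Sum.inr (Sum.inl i), Sum.inr (Sum.inl j) => (j : ℕ) = (i : ℕ) + 1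
  | Sum.inr (Sum.inr j), Sum.inr (Sum.inl i) => (i : ℕ) = (j : ℕ) ∨ (i : ℕ) = (j : ℕ) + 1
  | _, _ => False

/-- The outerplanar 2-tree `G` on `98` vertices from the paper:  the root `r` is adjacent
to every `wᵢ`, the `wᵢ` form a path, and each `v_{j+1}` is adjacent to `w_j` and `w_{j+1}`. -/
def G98 : SimpleGraph V98 where
  Adj u v := Rel98 u v ∨ Rel98 v u
  symm := ⟨by intro u v h; exact h.symm⟩
  loopless := ⟨by
    rintro (u | i | j) h <;> rcases h with h | h <;> simp only [Rel98] at h <;> omega⟩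

/-- `H` is a minor of `G`: there are pairwise disjoint connected branch sets in `G`,
one for each vertex of `H`, such that every edge of `H` is realised by an edge of `G`
between the corresponding branch sets. -/
def HasMinor {V W : Type*} (G : SimpleGraph V) (H : SimpleGraph W) : Prop :=
  ∃ f : W → Set V,
    (∀ w, (G.induce (f w)).Connected) ∧
    (Pairwise fun a b => Disjoint (f a) (f b)) ∧
    ∀ a b, H.Adj a b → ∃ u ∈ f a, ∃ v ∈ f b, G.Adj u v

/-- A graph is outerplanar iff it has no `K₄` minor and no `K_{2,3}` minor. -/
def IsOuterplanar {V : Type*} (G : SimpleGraph V) : Prop :=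
  ¬ HasMinor G (SimpleGraph.completeGraph (Fin 4)) ∧
    ¬ HasMinor G (completeBipartiteGraph (Fin 2) (Fin 3))

/-!
Number the strip `G98 - r` by positions `2i` for `wᵢ` and `2i - 1` for `vᵢ`: every edge joins
positions at distance at most two, and distance two only between path vertices. Hence a
connected set avoiding `r` contains every even position between two of its vertices, and two
disjoint such sets lie one after the other along the strip, unless one of them is a single `vᵢ`
wedged between `wᵢ₋₁` and `wᵢ` of the other. In a `K₄` or `K₂,₃` model all branch sets but the one
through `r` therefore line up along the strip, each between any two of its neighbours. That is
impossible for a triangle, for a vertex with three neighbours and for a `4`-cycle, and deleting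
any vertex of `K₄` or `K₂,₃` leaves one of these. The triangle `r w₀ w₁` is an odd cycle.
-/

open SimpleGraph

def SimpleGraph.AdjSets {V : Type*} (G : SimpleGraph V) (S T : Set V) : Prop :=
  ∃ u ∈ S, ∃ v ∈ T, G.Adj u v

structure MinorModel {V W : Type*} (G : SimpleGraph V) (H : SimpleGraph W) where
  branch : W → Set V
  connected : ∀ a, (G.induce (branch a)).Connected
  pairwise_disjoint : Pairwise fun a b => Disjoint (branch a) (branch b)
  adjSets : ∀ ⦃a b⦄, H.Adj a b → G.AdjSets (branch a) (branch b)

theorem HasMinor.nonempty_minorModel {V W : Type*} {G : SimpleGraph V} {H : SimpleGraph W}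
    (h : HasMinor G H) : Nonempty (MinorModel G H) :=
  let ⟨f, hconn, hdisj, hadj⟩ := h
  ⟨⟨f, hconn, hdisj, hadj⟩⟩

namespace MinorModel

variable {V W : Type*} {G : SimpleGraph V} {H : SimpleGraph W} (M : MinorModel G H)

theorem branch_nonempty (a : W) : (M.branch a).Nonempty :=
  Set.nonempty_coe_sort.mp (M.connected a).nonempty

theorem exists_forall_ne_not_mem [Nonempty W] (v : V) :
    ∃ x, ∀ a, a ≠ x → v ∉ M.branch a := by
  by_cases h : ∃ x, v ∈ M.branch x
  · obtain ⟨x, hx⟩ := h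
    exact ⟨x, fun a hax hva => Set.disjoint_left.mp (M.pairwise_disjoint hax) hva hx⟩
  · push Not at h
    exact ⟨Classical.arbitrary W, fun a _ => h a⟩

end MinorModel

def NeighborOffEdges {W : Type*} (H : SimpleGraph W) : Prop :=
  ∀ ⦃a b c⦄, H.Adj a b → c ≠ a → c ≠ b → ∃ d, H.Adj c d ∧ d ≠ a ∧ d ≠ b

abbrev root : V98 := Sum.inl ()

/-- Positions along the strip `G98 - r`: `wᵢ ↦ 2i` and `v_{j+1} ↦ 2j+1`; the root gets an unused
even position. -/
def pos : V98 → ℕ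
  | Sum.inl _ => 98
  | Sum.inr (Sum.inl i) => 2 * i
  | Sum.inr (Sum.inr j) => 2 * j + 1

theorem pos_injective : Function.Injective pos := by
  rintro (u | i | j) (v | i' | j') h <;> simp only [pos] at h <;>
    first
      | rfl
      | exact congrArg _ (congrArg _ (Fin.ext (by omega)))
      | (exfalso; omega)

theorem pos_ne_of_disjoint {S T : Set V98} (h : Disjoint S T) {s t : V98} (hs : s ∈ S)
    (ht : t ∈ T) : pos s ≠ pos t :=
  fun hst => Set.disjoint_left.mp h hs (pos_injective hst ▸ ht)

theorem pos_even_of_adj_root {u : V98} (h : G98.Adj root u) : pos u % 2 = 0 := by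
  rcases u with u | i | j <;> rcases h with h | h <;> simp_all [Rel98, pos]

theorem pos_of_adj {u v : V98} (hu : u ≠ root) (hv : v ≠ root) (h : G98.Adj u v) :
    pos v = pos u + 1 ∨ pos u = pos v + 1 ∨
      pos u % 2 = 0 ∧ (pos v = pos u + 2 ∨ pos u = pos v + 2) := by
  rcases u with u | i | j <;> rcases v with v | i' | j' <;> rcases h with h | h <;>
    simp_all [Rel98, pos] <;> omega

theorem pos_of_adj_of_pos_odd {u v : V98} {k : ℕ} (hu : pos u = 2 * k + 1) (h : G98.Adj u v) :
    pos v = 2 * k ∨ pos v = 2 * k + 2 := by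
  have hur : u ≠ root := by rintro rfl; simp [pos] at hu; omega
  have hvr : v ≠ root := by rintro rfl; have := pos_even_of_adj_root h.symm; omega
  have := pos_of_adj hur hvr h
  omega

def Before (S T : Set V98) : Prop := ∀ s ∈ S, ∀ t ∈ T, pos s < pos t

theorem before_iff_lt {S T : Set V98} (h : Before S T ∨ Before T S) {s t : V98} (hs : s ∈ S)
    (ht : t ∈ T) : Before S T ↔ pos s < pos t := by
  refine ⟨fun h' => h' s hs t ht, fun hlt => h.resolve_right fun h' => ?_⟩
  exact absurd (h' t ht s hs) (by omega)

theorem exists_pos_eq_of_walk {S : Set V98} (hS : root ∉ S) {a b : S}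
    (w : (G98.induce S).Walk a b) {j : ℕ} (ha : pos a ≤ 2 * j) (hb : 2 * j ≤ pos b) :
    ∃ s ∈ S, pos s = 2 * j := by
  induction w with
  | nil => exact ⟨_, Subtype.property _, le_antisymm ha hb⟩
  | @cons u v w huv _ ih =>
    by_cases hv : pos v ≤ 2 * j
    · exact ih hv hb
    · have := pos_of_adj (ne_of_mem_of_not_mem u.2 hS) (ne_of_mem_of_not_mem v.2 hS) huv
      exact ⟨u, u.2, by omega⟩

/-- `wⱼ` and `r` separate the strip. -/
theorem exists_pos_eq {S : Set V98} (hS : (G98.induce S).Connected) (hSr : root ∉ S)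
    {s t : V98} (hs : s ∈ S) (ht : t ∈ S) {j : ℕ} (h₁ : pos s ≤ 2 * j) (h₂ : 2 * j ≤ pos t) :
    ∃ u ∈ S, pos u = 2 * j :=
  exists_pos_eq_of_walk hSr (hS.preconnected ⟨s, hs⟩ ⟨t, ht⟩).some h₁ h₂

/-- A vertex of `S` strictly between two vertices of `T` forces `S` to be a single `vᵢ` whose
two neighbours `wᵢ₋₁`, `wᵢ` lie in `T`; so everything adjacent to `S` meets `T`. -/
theorem not_disjoint_of_pos_between {S T U : Set V98} (hS : (G98.induce S).Connected)
    (hT : (G98.induce T).Connected) (hSr : root ∉ S) (hTr : root ∉ T) (hST : Disjoint S T)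
    {a b d : V98} (ha : a ∈ S) (hb : b ∈ T) (hd : d ∈ T) (hda : pos d < pos a)
    (hab : pos a < pos b) (hSU : G98.AdjSets S U) : ¬ Disjoint U T := by
  obtain ⟨k, hk⟩ : ∃ k, pos a = 2 * k + 1 := by
    obtain ⟨t, ht, hta⟩ := exists_pos_eq hT hTr hd hb (j := pos a / 2) (by omega) (by omega)
    have := pos_ne_of_disjoint hST ha ht
    exact ⟨pos a / 2, by omega⟩
  obtain ⟨t₁, ht₁, hpos₁⟩ := exists_pos_eq hT hTr hd hb (j := k) (by omega) (by omega)
  obtain ⟨t₂, ht₂, hpos₂⟩ := exists_pos_eq hT hTr hd hb (j := k + 1) (by omega) (by omega)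
  have hSk : ∀ s ∈ S, pos s = 2 * k + 1 := by
    intro s hs
    by_contra hne
    obtain ⟨u, hu, hpos⟩ | ⟨u, hu, hpos⟩ :
        (∃ u ∈ S, pos u = 2 * k) ∨ (∃ u ∈ S, pos u = 2 * (k + 1)) := by
      rcases Nat.lt_or_gt_of_ne hne with h | h
      · exact .inl (exists_pos_eq hS hSr hs ha (by omega) (by omega))
      · exact .inr (exists_pos_eq hS hSr ha hs (by omega) (by omega))
    · exact pos_ne_of_disjoint hST hu ht₁ (by omega)
    · exact pos_ne_of_disjoint hST hu ht₂ (by omega)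
  obtain ⟨s, hs, u, hu, hsu⟩ := hSU
  intro hUT
  rcases pos_of_adj_of_pos_odd (hSk s hs) hsu with h | h
  · exact pos_ne_of_disjoint hUT hu ht₁ (by omega)
  · exact pos_ne_of_disjoint hUT hu ht₂ (by omega)

theorem before_or_before {S T U U' : Set V98} (hS : (G98.induce S).Connected)
    (hT : (G98.induce T).Connected) (hSr : root ∉ S) (hTr : root ∉ T) (hST : Disjoint S T)
    (hSU : G98.AdjSets S U) (hUT : Disjoint U T) (hTU' : G98.AdjSets T U')
    (hU'S : Disjoint U' S) : Before S T ∨ Before T S := by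
  by_contra! h
  simp only [Before, not_forall, not_lt] at h
  obtain ⟨⟨s, hs, t, ht, hts⟩, ⟨t', ht', s', hs', hst'⟩⟩ := h
  have hne := pos_ne_of_disjoint hST hs ht
  have hne' := pos_ne_of_disjoint hST hs' ht'
  rcases lt_or_gt_of_ne (pos_ne_of_disjoint hST hs' ht) with h | h
  · exact not_disjoint_of_pos_between hT hS hTr hSr hST.symm ht hs hs' (by omega) (by omega)
      hTU' hU'S
  · exact not_disjoint_of_pos_between hS hT hSr hTr hST hs' ht' ht (by omega) (by omega)
      hSU hUT

/-- An edge of the strip spans at most one vertex, an odd one, whose neighbours are the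
two ends of the edge. -/
theorem not_before_before {S T Z U : Set V98} (hSr : root ∉ S) (hTr : root ∉ T)
    (hST : G98.AdjSets S T) (hZU : G98.AdjSets Z U) (hUS : Disjoint U S) (hUT : Disjoint U T) :
    ¬ (Before S Z ∧ Before Z T) := by
  rintro ⟨hSZ, hZT⟩
  obtain ⟨s, hs, t, ht, hst⟩ := hST
  obtain ⟨z, hz, u, hu, hzu⟩ := hZU
  have hsz := hSZ s hs z hz
  have hzt := hZT z hz t ht
  have hst := pos_of_adj (ne_of_mem_of_not_mem hs hSr) (ne_of_mem_of_not_mem ht hTr) hst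
  rcases pos_of_adj_of_pos_odd (k := pos s / 2) (by omega) hzu with h | h
  · exact pos_ne_of_disjoint hUS hu hs (by omega)
  · exact pos_ne_of_disjoint hUT hu ht (by omega)

/-- `x` indexes the branch set through the root; `p` orders the others along the strip. -/
theorem MinorModel.exists_between_neighbors {W : Type*} [Nonempty W] {H : SimpleGraph W}
    (hH : NeighborOffEdges H) (M : MinorModel G98 H) :
    ∃ (x : W) (p : W → ℕ), ∀ ⦃a b c⦄, a ≠ x → b ≠ x → c ≠ x → b ≠ c → H.Adj a b →
      H.Adj a c → min (p b) (p c) < p a ∧ p a < max (p b) (p c) := by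
  obtain ⟨x, hx⟩ := M.exists_forall_ne_not_mem root
  choose pt hpt using M.branch_nonempty
  refine ⟨x, fun a => pos (pt a), fun a b c hax hbx hcx hbc hab hac => ?_⟩
  have disj {a b} (h : a ≠ b) := M.pairwise_disjoint h
  obtain ⟨d, hbd, hda, hdc⟩ := hH hac hab.ne.symm hbc
  obtain ⟨e, hce, hea, heb⟩ := hH hab hac.ne.symm hbc.symm
  have oab := before_or_before (M.connected a) (M.connected b) (hx a hax) (hx b hbx)
    (disj hab.ne) (M.adjSets hac) (disj hbc.symm) (M.adjSets hbd) (disj hda)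
  have oac := before_or_before (M.connected a) (M.connected c) (hx a hax) (hx c hcx)
    (disj hac.ne) (M.adjSets hab) (disj hbc) (M.adjSets hce) (disj hea)
  have obc := before_or_before (M.connected b) (M.connected c) (hx b hbx) (hx c hcx)
    (disj hbc) (M.adjSets hab.symm) (disj hac.ne) (M.adjSets hac.symm) (disj hab.ne)
  -- Neither `b` nor `c` lies between `a` and the other, as `d` and `e` witness.
  have h₁ := not_before_before (hx a hax) (hx c hcx) (M.adjSets hac) (M.adjSets hbd)
    (disj hda) (disj hdc)
  have h₂ := not_before_before (hx c hcx) (hx a hax) (M.adjSets hac.symm) (M.adjSets hbd)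
    (disj hdc) (disj hda)
  have h₃ := not_before_before (hx a hax) (hx b hbx) (M.adjSets hab) (M.adjSets hce)
    (disj hea) (disj heb)
  have h₄ := not_before_before (hx b hbx) (hx a hax) (M.adjSets hab.symm) (M.adjSets hce)
    (disj heb) (disj hea)
  rw [before_iff_lt oab (hpt a) (hpt b), before_iff_lt obc (hpt b) (hpt c)] at h₁
  rw [before_iff_lt obc.symm (hpt c) (hpt b), before_iff_lt oab.symm (hpt b) (hpt a)] at h₂
  rw [before_iff_lt oac (hpt a) (hpt c), before_iff_lt obc.symm (hpt c) (hpt b)] at h₃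
  rw [before_iff_lt obc (hpt b) (hpt c), before_iff_lt oac.symm (hpt c) (hpt a)] at h₄
  replace oab := oab.imp (· _ (hpt a) _ (hpt b)) (· _ (hpt b) _ (hpt a))
  replace oac := oac.imp (· _ (hpt a) _ (hpt c)) (· _ (hpt c) _ (hpt a))
  replace obc := obc.imp (· _ (hpt b) _ (hpt c)) (· _ (hpt c) _ (hpt b))
  dsimp only
  omega

theorem neighborOffEdges_completeGraph_fin_four :
    NeighborOffEdges (completeGraph (Fin 4)) := by
  unfold NeighborOffEdges; decide

theorem neighborOffEdges_completeBipartiteGraph_fin_two_fin_three :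
    NeighborOffEdges (completeBipartiteGraph (Fin 2) (Fin 3)) := by
  simp only [NeighborOffEdges, completeBipartiteGraph_adj]; decide

theorem not_hasMinor_completeGraph_fin_four :
    ¬ HasMinor G98 (completeGraph (Fin 4)) := by
  intro h
  obtain ⟨x, p, hp⟩ :=
    h.nonempty_minorModel.some.exists_between_neighbors neighborOffEdges_completeGraph_fin_four
  obtain ⟨a, b, c, hab, hac, hbc, hax, hbx, hcx⟩ := (by decide :
    ∀ x : Fin 4, ∃ a b c : Fin 4, a ≠ b ∧ a ≠ c ∧ b ≠ c ∧ a ≠ x ∧ b ≠ x ∧ c ≠ x) x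
  have := hp hax hbx hcx hbc hab hac
  have := hp hbx hax hcx hac hab.symm hbc
  have := hp hcx hax hbx hab hac.symm hbc.symm
  omega

theorem not_hasMinor_completeBipartiteGraph_fin_two_fin_three :
    ¬ HasMinor G98 (completeBipartiteGraph (Fin 2) (Fin 3)) := by
  intro h
  obtain ⟨x, p, hp⟩ := h.nonempty_minorModel.some.exists_between_neighbors
    neighborOffEdges_completeBipartiteGraph_fin_two_fin_three
  rcases x with i | j
  · obtain ⟨i', hi'⟩ : ∃ i', i' ≠ i := ⟨i + 1, by omega⟩
    have := hp (a := .inl i') (b := .inr 0) (c := .inr 1) (by simpa) (by simp) (by simp)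
      (by simp) (by simp) (by simp)
    have := hp (a := .inl i') (b := .inr 0) (c := .inr 2) (by simpa) (by simp) (by simp)
      (by simp) (by simp) (by simp)
    have := hp (a := .inl i') (b := .inr 1) (c := .inr 2) (by simpa) (by simp) (by simp)
      (by simp) (by simp) (by simp)
    omega
  · obtain ⟨k, l, hkl, hkj, hlj⟩ :=
      (by decide : ∀ j : Fin 3, ∃ k l : Fin 3, k ≠ l ∧ k ≠ j ∧ l ≠ j) j
    have := hp (a := .inl 0) (b := .inr k) (c := .inr l) (by simp) (by simpa) (by simpa)
      (by simpa) (by simp) (by simp)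
    have := hp (a := .inl 1) (b := .inr k) (c := .inr l) (by simp) (by simpa) (by simpa)
      (by simpa) (by simp) (by simp)
    have := hp (a := .inr k) (b := .inl 0) (c := .inl 1) (by simpa) (by simp) (by simp)
      (by simp) (by simp) (by simp)
    have := hp (a := .inr l) (b := .inl 0) (c := .inl 1) (by simpa) (by simp) (by simp)
      (by simp) (by simp) (by simp)
    omega

theorem G98_not_colorable_two : ¬ G98.Colorable 2 := fun h =>
  h.cliqueFree (by norm_num) _ <|
    (is3Clique_triple_iff (a := root) (b := .inr (.inl 0)) (c := .inr (.inl 1))).mpr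
      ⟨.inl trivial, .inl trivial, .inl rfl⟩

/-- The graph `G` (root `r` joined to a path `w₀, …, w₄₈`, with
pendant-triangle vertices `v₁, …, v₄₈` where `vᵢ ~ w_{i-1}, wᵢ`) is outerplanar and is
not bipartite. -/
theorem G98_outerplanar_not_bipartite :
    IsOuterplanar G98 ∧ ¬ G98.Colorable 2 :=
  ⟨⟨not_hasMinor_completeGraph_fin_four, not_hasMinor_completeBipartiteGraph_fin_two_fin_three⟩,
    G98_not_colorable_two⟩
end

section
/- Let k ≥ 3 and let G be the closure of a path p_1,...,p_{k-1} with 2k-4 leaves l_1,...,l_{2k-4} attached to p_{k-1}. If c is a partial proper coloring of G in which p_1,...,p_{k-2} are colored with k-2 distinct colors and some k-2 of the leaves are colored with k-2 further distinct colors (disjoint from the first set), then the vertex p_{k-1} cannot be properly colored using a palette of fewer than 2k-3 colors. -/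
/-! The vertices `p₁, …, p_{k-2}` and the `k - 2` chosen leaves are `2k - 4` neighbours of
`p_{k-1}` with pairwise distinct colors, so by counting they use up every color of a palette of
at most `2k - 4` colors. -/

open Finset

theorem Finset.exists_mem_eq_some_of_injOn {ι α : Type*} [Fintype α] {f : ι → Option α}
    {s : Finset ι} (hf : Set.InjOn f s) (hsome : ∀ i ∈ s, ∃ a, f i = some a)
    (hcard : Fintype.card α ≤ #s) (a : α) : ∃ i ∈ s, f i = some a := by
  have hmaps : Set.MapsTo f s (univ.map Function.Embedding.some : Finset (Option α)) := by
    intro i hi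
    obtain ⟨b, hb⟩ := hsome i hi
    simp [hb]
  exact surjOn_of_injOn_of_card_le f hmaps hf (by simpa using hcard) (by simp)

theorem pathLeafGraph_adj_inl {k : ℕ} {i : Fin (k - 1)} {u : Fin (k - 1) ⊕ Fin (2 * k - 4)}
    (h : Sum.inl i ≠ u) : (pathLeafGraph k).Adj (Sum.inl i) u :=
  ⟨h, Or.inl rfl⟩

/-- Let `k ≥ 3` and let `G` be the closure of a path `p₁, …, p_{k-1}`
with `2k - 4` leaves attached to `p_{k-1}`.  Suppose `c` is a partial proper coloring of
`G` with colors from a palette of `t ≤ 2k - 4` colors in which `p₁, …, p_{k-2}` are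
colored with `k - 2` distinct colors and some `k - 2` of the leaves are colored with
`k - 2` further distinct colors disjoint from the first set.  Then `p_{k-1}` cannot be
properly colored: every color of the palette already appears on a neighbour of `p_{k-1}`. -/
theorem pathLeafGraph_no_legal_color (k : ℕ) (hk : 3 ≤ k) (t : ℕ) (ht : t ≤ 2 * k - 4)
    (c : (Fin (k - 1) ⊕ Fin (2 * k - 4)) → Option (Fin t))
    (hpath : ∀ i : Fin (k - 1), (i : ℕ) < k - 2 → ∃ a, c (Sum.inl i) = some a)
    (hpathinj : ∀ i j : Fin (k - 1), (i : ℕ) < k - 2 → (j : ℕ) < k - 2 →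
      c (Sum.inl i) = c (Sum.inl j) → i = j)
    (hleaves : ∃ L : Finset (Fin (2 * k - 4)), L.card = k - 2 ∧
      (∀ j ∈ L, ∃ a, c (Sum.inr j) = some a) ∧
      (∀ j j' : Fin (2 * k - 4), j ∈ L → j' ∈ L → c (Sum.inr j) = c (Sum.inr j') → j = j') ∧
      ∀ j ∈ L, ∀ i : Fin (k - 1), (i : ℕ) < k - 2 → c (Sum.inr j) ≠ c (Sum.inl i)) :
    ∀ a : Fin t, ∃ u, (pathLeafGraph k).Adj (Sum.inl ⟨k - 2, by omega⟩) u ∧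
      c u = some a := by
  obtain ⟨L, hLcard, hLcol, hLinj, hLdisj⟩ := hleaves
  set P : Finset (Fin (k - 1)) := Iio ⟨k - 2, by omega⟩
  have mem_P (i : Fin (k - 1)) : i ∈ P ↔ (i : ℕ) < k - 2 := by simp [P, Fin.lt_def]
  have hinj : Set.InjOn c (P.disjSum L) := by
    rintro (i | j) hu (i' | j') hv huv <;>
      simp only [mem_coe, inl_mem_disjSum, inr_mem_disjSum] at hu hv
    · rw [hpathinj i i' ((mem_P i).1 hu) ((mem_P i').1 hv) huv]
    · exact absurd huv.symm (hLdisj j' hv i ((mem_P i).1 hu))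
    · exact absurd huv (hLdisj j hu i' ((mem_P i').1 hv))
    · rw [hLinj j j' hu hv huv]
  have hcolored : ∀ u ∈ P.disjSum L, ∃ a, c u = some a := by
    rintro (i | j) hu
    · exact hpath i ((mem_P i).1 (inl_mem_disjSum.1 hu))
    · exact hLcol j (inr_mem_disjSum.1 hu)
  have hcard : Fintype.card (Fin t) ≤ #(P.disjSum L) := by
    simp only [Fintype.card_fin, card_disjSum, P, Fin.card_Iio, hLcard]
    omega
  intro a
  obtain ⟨u, hu, hcu⟩ := exists_mem_eq_some_of_injOn hinj hcolored hcard a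
  refine ⟨u, pathLeafGraph_adj_inl ?_, hcu⟩
  rintro rfl
  simp [P] at hu
end
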